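/- Let G be a group whose derived subgroup G′ is infinite cyclic. Then every element of G of finite odd order lies in the center of G. -/

import Mathlib

/-!
Conjugation by `g` preserves the infinite cyclic group `G' = ⟨ρ⟩`, so it sends `ρ` to `ρ ^ m`
with `m ^ (orderOf g) = 1`; as `orderOf g` is odd, `m = 1` and `g` centralizes `G'`.
For any `x`, the commutator `⁅g, x⁆ ∈ G'` then commutes with `g`, so
`⁅g ^ n, x⁆ = ⁅g, x⁆ ^ n`. Hence `⁅g, x⁆` has finite order, and the only element of finite
order in `⟨ρ⟩` is `1`.
-/

open scoped commutatorElement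

section

variable {G : Type*} [Group G]

lemma conj_pow_eq_zpow_pow {g ρ : G} {m : ℤ} (h : g * ρ * g⁻¹ = ρ ^ m) (j : ℕ) :
    g ^ j * ρ * (g ^ j)⁻¹ = ρ ^ (m ^ j) := by
  induction j with
  | zero => simp
  | succ j ih =>
    calc g ^ (j + 1) * ρ * (g ^ (j + 1))⁻¹ = g * (g ^ j * ρ * (g ^ j)⁻¹) * g⁻¹ := by group
      _ = (g * ρ * g⁻¹) ^ m ^ j := by rw [ih, conj_zpow]
      _ = ρ ^ m ^ (j + 1) := by rw [h, ← zpow_mul, pow_succ', mul_comm]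

lemma eq_one_of_mem_zpowers_of_isOfFinOrder {ρ y : G} (hρ : ¬IsOfFinOrder ρ)
    (hy : y ∈ Subgroup.zpowers ρ) (hfin : IsOfFinOrder y) : y = 1 := by
  obtain ⟨k, rfl⟩ := hy
  obtain ⟨n, hn, hkn⟩ := isOfFinOrder_iff_zpow_eq_one.mp hfin
  have hk : k = 0 := by
    by_contra hk
    exact hρ <| isOfFinOrder_iff_zpow_eq_one.mpr
      ⟨k * n, mul_ne_zero hk hn, by rwa [zpow_mul]⟩
  simp [hk]

lemma commute_of_conj_mem_zpowers_of_odd_orderOf {g ρ : G} (hρ : ¬IsOfFinOrder ρ)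
    (hconj : g * ρ * g⁻¹ ∈ Subgroup.zpowers ρ) (hodd : Odd (orderOf g)) : Commute g ρ := by
  obtain ⟨m, hm : ρ ^ m = g * ρ * g⁻¹⟩ := hconj
  have hm_pow : m ^ orderOf g = 1 := by
    have h := conj_pow_eq_zpow_pow hm.symm (orderOf g)
    rw [pow_orderOf_eq_one, one_mul, inv_one, mul_one] at h
    exact injective_zpow_iff_not_isOfFinOrder.mpr hρ (by simpa using h.symm)
  have hm_one : m = 1 := hodd.pow_inj.mp (by rw [hm_pow, one_pow])
  rw [hm_one, zpow_one, eq_comm, mul_inv_eq_iff_eq_mul] at hm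
  exact hm

lemma commutatorElement_pow_left_of_commute {g x : G} (h : Commute g ⁅g, x⁆) (n : ℕ) :
    ⁅g ^ n, x⁆ = ⁅g, x⁆ ^ n := by
  induction n with
  | zero => simp
  | succ n ih =>
    rw [pow_succ', commutatorElement_mul_left_eq_conj_mul, ih, (h.pow_right n).eq,
      mul_inv_cancel_right, pow_succ]

end

theorem mem_center_of_odd_order_general {G : Type*} [Group G] (ρ : G)
    (hder : commutator G = Subgroup.zpowers ρ) (hρ : ¬ IsOfFinOrder ρ)
    (g : G) (hodd : Odd (orderOf g)) :
    g ∈ Subgroup.center G := by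
  have hρ_mem : ρ ∈ commutator G := hder ▸ Subgroup.mem_zpowers ρ
  have hconj : g * ρ * g⁻¹ ∈ Subgroup.zpowers ρ :=
    hder ▸ Subgroup.Normal.conj_mem inferInstance ρ hρ_mem g
  have hgρ : Commute g ρ := commute_of_conj_mem_zpowers_of_odd_orderOf hρ hconj hodd
  refine Subgroup.mem_center_iff.mpr fun x => ?_
  have hgx_mem : ⁅g, x⁆ ∈ Subgroup.zpowers ρ :=
    hder ▸ Subgroup.commutator_mem_commutator (Subgroup.mem_top g) (Subgroup.mem_top x)
  have hgx_comm : Commute g ⁅g, x⁆ := by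
    obtain ⟨k, hk⟩ := hgx_mem
    exact hk ▸ hgρ.zpow_right k
  have hgx_fin : IsOfFinOrder ⁅g, x⁆ := isOfFinOrder_iff_pow_eq_one.mpr
    ⟨orderOf g, hodd.pos, by
      rw [← commutatorElement_pow_left_of_commute hgx_comm, pow_orderOf_eq_one,
        commutatorElement_one_left]⟩
  exact (commutatorElement_eq_one_iff_mul_comm.mp
    (eq_one_of_mem_zpowers_of_isOfFinOrder hρ hgx_mem hgx_fin)).symm

/-- If the derived subgroup of `G` is infinite cyclic, then every element of `G`
of finite odd order is central in `G`. -/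
theorem mem_center_of_odd_order {G : Type*} [Group G] (ρ : G)
    (hder : commutator G = Subgroup.zpowers ρ) (hρ : ¬ IsOfFinOrder ρ)
    (g : G) (hg : IsOfFinOrder g) (hodd : Odd (orderOf g)) :
    g ∈ Subgroup.center G :=
  mem_center_of_odd_order_general ρ hder hρ g hodd
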